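/- Perturbation inequality in the proof of Lemma 1: in the perturbed-problem setup, suppose (x⁰, y⁰, u⁰) is 0-feasible with cost equal to ψ(0), x⁰ h' > 0 and y⁰ h' > 0. Then for every ε with 0 < ε < min (x⁰ h') (y⁰ h'), one has ψ(ε) ≤ ψ(0) - ((α h' * b h' + β h' * a h') / (a h' + b h')) * ε. -/

import Mathlib

open Finset

/-- A triple `(x, y, u)` is `ε`-feasible for the perturbed problem. -/
def PertFeasible (H m : ℕ) (h' : Fin H) (g : Fin H → (Fin m → ℝ) → ℝ)
    (Cu : Set (Fin H → Fin m → ℝ)) (Cy : Set (Fin H → ℝ)) (ε : ℝ)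
    (x y : Fin H → ℝ) (u : Fin H → Fin m → ℝ) : Prop :=
  u ∈ Cu ∧ y ∈ Cy ∧ (∀ h, h ≠ h' → g h (u h) ≤ x h + y h) ∧
    g h' (u h') ≤ x h' + y h' + ε ∧ (∀ h, 0 ≤ x h) ∧ (∀ h, 0 ≤ y h)

/-- The cost of a triple `(x, y, u)`. -/
def PertCost (H m : ℕ) (α β a b : Fin H → ℝ)
    (f : (Fin H → Fin m → ℝ) → ℝ) (K : ℝ → ℝ)
    (x y : Fin H → ℝ) (u : Fin H → Fin m → ℝ) : ℝ :=
  (∑ h, (α h * x h + β h * y h)) + f u + K (∑ h, (a h * x h - b h * y h))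

/-- The optimal value `ψ(ε)` of the perturbed problem. -/
noncomputable def psi (H m : ℕ) (h' : Fin H) (α β a b : Fin H → ℝ)
    (g : Fin H → (Fin m → ℝ) → ℝ) (Cu : Set (Fin H → Fin m → ℝ))
    (Cy : Set (Fin H → ℝ)) (f : (Fin H → Fin m → ℝ) → ℝ) (K : ℝ → ℝ)
    (ε : ℝ) : ℝ :=
  sInf {c : ℝ | ∃ x y : Fin H → ℝ, ∃ u : Fin H → Fin m → ℝ,
    PertFeasible H m h' g Cu Cy ε x y u ∧ c = PertCost H m α β a b f K x y u}

/-
Lower `x h'` by `δx = b h' ε / (a h' + b h')` and `y h'` by `δy = a h' ε / (a h' + b h')` in the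
optimal triple. The slack `δx + δy = ε` is absorbed by the perturbed constraint at `h'`, downward
closedness of `C_y` keeps `y` admissible, and `a h' δx = b h' δy` leaves the argument of `K`
unchanged, so the cost drops by exactly `α h' δx + β h' δy`.
-/

lemma sum_mul_sub_single {ι R : Type*} [Fintype ι] [DecidableEq ι] [CommRing R]
    (i : ι) (w x : ι → R) (d : R) :
    ∑ j, w j * (x j - (Pi.single i d : ι → R) j) = ∑ j, w j * x j - w i * d := by
  simp [mul_sub, sum_sub_distrib, Pi.single_apply]

lemma sub_single_nonneg {ι R : Type*} [DecidableEq ι] [AddGroup R] [LE R] [AddRightMono R]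
    {x : ι → R} (hx : ∀ j, 0 ≤ x j) {i : ι} {d : R} (hd : d ≤ x i) (j : ι) :
    0 ≤ (x - Pi.single i d : ι → R) j := by
  by_cases hj : j = i
  · subst hj; simp [hd]
  · simp [hj, hx j]

lemma psi_le_pertCost {H m : ℕ} {h' : Fin H} {α β a b : Fin H → ℝ}
    {g : Fin H → (Fin m → ℝ) → ℝ} {Cu : Set (Fin H → Fin m → ℝ)} {Cy : Set (Fin H → ℝ)}
    {f : (Fin H → Fin m → ℝ) → ℝ} {K : ℝ → ℝ} {ε : ℝ}
    (hbdd : BddBelow {c : ℝ | ∃ x y : Fin H → ℝ, ∃ u : Fin H → Fin m → ℝ,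
      PertFeasible H m h' g Cu Cy ε x y u ∧ c = PertCost H m α β a b f K x y u})
    {x y : Fin H → ℝ} {u : Fin H → Fin m → ℝ} (hfeas : PertFeasible H m h' g Cu Cy ε x y u) :
    psi H m h' α β a b g Cu Cy f K ε ≤ PertCost H m α β a b f K x y u :=
  csInf_le hbdd ⟨x, y, u, hfeas, rfl⟩

lemma PertFeasible.sub_single {H m : ℕ} {h' : Fin H} {g : Fin H → (Fin m → ℝ) → ℝ}
    {Cu : Set (Fin H → Fin m → ℝ)} {Cy : Set (Fin H → ℝ)}
    (hCydown : ∀ y ∈ Cy, ∀ y' : Fin H → ℝ, (∀ h, y' h ≤ y h) → y' ∈ Cy)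
    {ε : ℝ} {x y : Fin H → ℝ} {u : Fin H → Fin m → ℝ}
    (hfeas : PertFeasible H m h' g Cu Cy ε x y u) {δx δy : ℝ}
    (hδy : 0 ≤ δy) (hδx_le : δx ≤ x h') (hδy_le : δy ≤ y h') :
    PertFeasible H m h' g Cu Cy (ε + δx + δy) (x - Pi.single h' δx) (y - Pi.single h' δy) u := by
  obtain ⟨hu, hy, hg, hg', hx_nonneg, hy_nonneg⟩ := hfeas
  refine ⟨hu, hCydown y hy _ (sub_le_self y (Pi.single_nonneg.2 hδy)), fun h hne => ?_, ?_,
    sub_single_nonneg hx_nonneg hδx_le, sub_single_nonneg hy_nonneg hδy_le⟩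
  · simpa [Pi.single_apply, hne] using hg h hne
  · simp only [Pi.sub_apply, Pi.single_eq_same]
    linarith

lemma pertCost_sub_single {H m : ℕ} (h' : Fin H) (α β a b : Fin H → ℝ)
    (f : (Fin H → Fin m → ℝ) → ℝ) (K : ℝ → ℝ) (x y : Fin H → ℝ) (u : Fin H → Fin m → ℝ)
    {δx δy : ℝ} (hbal : a h' * δx = b h' * δy) :
    PertCost H m α β a b f K (x - Pi.single h' δx) (y - Pi.single h' δy) u =
      PertCost H m α β a b f K x y u - (α h' * δx + β h' * δy) := by
  have hK_arg (A B : ℝ) : A - a h' * δx - (B - b h' * δy) = A - B := by rw [hbal]; ring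
  simp only [PertCost, Pi.sub_apply, sum_add_distrib, sum_sub_distrib, sum_mul_sub_single, hK_arg]
  ring

theorem perturbation_inequality_general
    (H m : ℕ) (h' : Fin H)
    (α β a b : Fin H → ℝ)
    (ha : ∀ h, 0 < a h) (hb : ∀ h, 0 < b h)
    (Cu : Set (Fin H → Fin m → ℝ))
    (Cy : Set (Fin H → ℝ))
    (hCydown : ∀ y ∈ Cy, ∀ y' : Fin H → ℝ, (∀ h, y' h ≤ y h) → y' ∈ Cy)
    (f : (Fin H → Fin m → ℝ) → ℝ)
    (g : Fin H → (Fin m → ℝ) → ℝ)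
    (K : ℝ → ℝ)
    (hbdd : ∀ ε : ℝ, 0 ≤ ε → BddBelow
      {c : ℝ | ∃ x y : Fin H → ℝ, ∃ u : Fin H → Fin m → ℝ,
        PertFeasible H m h' g Cu Cy ε x y u ∧ c = PertCost H m α β a b f K x y u})
    (x0 y0 : Fin H → ℝ) (u0 : Fin H → Fin m → ℝ)
    (hfeas0 : PertFeasible H m h' g Cu Cy 0 x0 y0 u0)
    (hopt : PertCost H m α β a b f K x0 y0 u0 = psi H m h' α β a b g Cu Cy f K 0) :
    ∀ ε : ℝ, 0 < ε → ε < min (x0 h') (y0 h') →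
      psi H m h' α β a b g Cu Cy f K ε ≤
        psi H m h' α β a b g Cu Cy f K 0 -
          ((α h' * b h' + β h' * a h') / (a h' + b h')) * ε := by
  intro ε hε hε_lt
  have hab : 0 < a h' + b h' := add_pos (ha h') (hb h')
  set δx := b h' * ε / (a h' + b h')
  set δy := a h' * ε / (a h' + b h')
  have hδx : 0 ≤ δx := by positivity [hb h']
  have hδy : 0 ≤ δy := by positivity [ha h']
  have hsum : δx + δy = ε := by simp only [δx, δy]; field_simp; ring
  have hfeas := hfeas0.sub_single (δx := δx) hCydown hδy
    (by linarith [min_le_left (x0 h') (y0 h')]) (by linarith [min_le_right (x0 h') (y0 h')])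
  rw [zero_add, hsum] at hfeas
  calc psi H m h' α β a b g Cu Cy f K ε
      ≤ PertCost H m α β a b f K (x0 - Pi.single h' δx) (y0 - Pi.single h' δy) u0 :=
        psi_le_pertCost (hbdd ε hε.le) hfeas
    _ = psi H m h' α β a b g Cu Cy f K 0 - (α h' * δx + β h' * δy) := by
        rw [pertCost_sub_single h' α β a b f K x0 y0 u0 (by simp only [δx, δy]; ring), hopt]
    _ = _ := by simp only [δx, δy]; field_simp

/-- Perturbation inequality in the proof of Lemma 1. -/
theorem perturbation_inequality
    (H m : ℕ) (hH : 1 ≤ H) (h' : Fin H)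
    (α β a b : Fin H → ℝ)
    (hα : ∀ h, 0 < α h) (hβ : ∀ h, 0 < β h)
    (ha : ∀ h, 0 < a h) (hb : ∀ h, 0 < b h)
    (Cu : Set (Fin H → Fin m → ℝ)) (hCu : Convex ℝ Cu)
    (Cy : Set (Fin H → ℝ)) (hCy : Convex ℝ Cy)
    (hCydown : ∀ y ∈ Cy, ∀ y' : Fin H → ℝ, (∀ h, y' h ≤ y h) → y' ∈ Cy)
    (f : (Fin H → Fin m → ℝ) → ℝ) (hf : ConvexOn ℝ Set.univ f)
    (g : Fin H → (Fin m → ℝ) → ℝ) (hg : ∀ h, ConvexOn ℝ Set.univ (g h))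
    (K : ℝ → ℝ) (hK : ConvexOn ℝ Set.univ K)
    (hbdd : ∀ ε : ℝ, 0 ≤ ε → BddBelow
      {c : ℝ | ∃ x y : Fin H → ℝ, ∃ u : Fin H → Fin m → ℝ,
        PertFeasible H m h' g Cu Cy ε x y u ∧ c = PertCost H m α β a b f K x y u})
    (x0 y0 : Fin H → ℝ) (u0 : Fin H → Fin m → ℝ)
    (hfeas0 : PertFeasible H m h' g Cu Cy 0 x0 y0 u0)
    (hopt : PertCost H m α β a b f K x0 y0 u0 = psi H m h' α β a b g Cu Cy f K 0)
    (hx0 : 0 < x0 h') (hy0 : 0 < y0 h') :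
    ∀ ε : ℝ, 0 < ε → ε < min (x0 h') (y0 h') →
      psi H m h' α β a b g Cu Cy f K ε ≤
        psi H m h' α β a b g Cu Cy f K 0 -
          ((α h' * b h' + β h' * a h') / (a h' + b h')) * ε :=
  perturbation_inequality_general H m h' α β a b ha hb Cu Cy hCydown f g K hbdd x0 y0 u0 hfeas0 hopt
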